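/- Let L ∈ Σ[∂] be monic of order n with constants C of characteristic zero. Then Z(L) is a free C[L]-module of rank d = |O|, with a basis {G_0 = 1, G_1, ..., G_{d−1}} consisting of operators that are order-minimal in Z(L) and whose order classes modulo n exhaust the group of orders O. Consequently Z(L) = C[L, G_1, ..., G_{d−1}]. -/

import Mathlib

open scoped Classical
noncomputable section

variable {R : Type} [Ring R]

/-- Left multiplication by `a` as an additive endomorphism of `R`. -/
def mulOp (a : R) : AddMonoid.End R := AddMonoidHom.mulLeft a

/-- The derivation as an additive endomorphism. -/
def derOp (d : R →+ R) : AddMonoid.End R := d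

/-- `d` satisfies the Leibniz rule. -/
def IsDeriv (d : R →+ R) : Prop := ∀ a b : R, d (a * b) = d a * b + a * d b

/-- Additive group of differential operators of order at most `n`:
sums of terms `a · ∂^i` with `i ≤ n`. -/
def OpLE (d : R →+ R) (n : ℕ) : AddSubgroup (AddMonoid.End R) :=
  AddSubgroup.closure {P | ∃ (a : R) (i : ℕ), i ≤ n ∧ P = mulOp a * derOp d ^ i}

/-- `L` is a differential operator. -/
def IsOp (d : R →+ R) (L : AddMonoid.End R) : Prop := ∃ n, L ∈ OpLE d n

/-- `L` is a differential operator of exact order `n`. -/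
def HasOrd (d : R →+ R) (L : AddMonoid.End R) (n : ℕ) : Prop :=
  L ∈ OpLE d n ∧ ∀ k, L ∈ OpLE d k → n ≤ k

/-- `L` is a monic differential operator of order `n`. -/
def MonicOrd (d : R →+ R) (L : AddMonoid.End R) (n : ℕ) : Prop :=
  HasOrd d L n ∧ L - derOp d ^ n ∈ OpLE d (n - 1)

/-- The centralizer of `L` in the ring of differential operators. -/
def Cent (d : R →+ R) (L : AddMonoid.End R) : Set (AddMonoid.End R) :=
  {A | IsOp d A ∧ L * A = A * L}

/-- Polynomials in `L` with constant coefficients. -/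
def CPoly (d : R →+ R) (L : AddMonoid.End R) : Set (AddMonoid.End R) :=
  {P | ∃ p : Polynomial R, (∀ k, d (p.coeff k) = 0) ∧
      P = ∑ i ∈ Finset.range (p.natDegree + 1), mulOp (p.coeff i) * L ^ i}

/-- The level of `L`: smallest order of an element of `Z(L) \ C[L]`. -/
def Level (d : R →+ R) (L : AddMonoid.End R) (M : ℕ) : Prop :=
  (∃ Q ∈ Cent d L, Q ∉ CPoly d L ∧ HasOrd d Q M) ∧
  ∀ Q ∈ Cent d L, Q ∉ CPoly d L → ∀ q, HasOrd d Q q → M ≤ q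

/-!
An operator is handled through its symbol: `diffOp d p = ∑ pᵢ ∂ⁱ`. Composition of operators is a
twisted product `symbMul` of symbols; for `p`, `q` of degrees `k`, `m` it agrees with `p * q` in the
coefficient of `X ^ (k + m)`, and exceeds it by `k pₖ d(qₘ)` in that of `X ^ (k + m - 1)`. As
`d ≠ 0` and the characteristic is zero, commutators with multiplication operators show that symbols
are unique, so orders and leading coefficients are well defined and multiplicative. Comparing the
second coefficients of `L A` and `A L` shows that the leading coefficient of any `A ∈ Z(L)` is a
constant. So if `G` is order-minimal in the class of `ord A` modulo `n`, then `A - c Lᵗ G` has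
smaller order for a suitable constant `c` and exponent `t`, and induction on the order writes `A`
over `C[L]` in the chosen `G`'s. Nonzero elements of `C[L]` have order divisible by `n`, so the
nonzero terms of a sum `∑ cᵢ Gᵢ` have orders in pairwise distinct classes modulo `n` and cannot
cancel.
-/

open Polynomial

lemma Polynomial.eq_zero_of_sum_eq_zero_of_injOn_natDegree {S ι : Type*} [Semiring S]
    {s : Finset ι} {f : ι → S[X]} (h : Set.InjOn (fun i => (f i).natDegree) {i | i ∈ s ∧ f i ≠ 0})
    (hsum : ∑ i ∈ s, f i = 0) : ∀ i ∈ s, f i = 0 := by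
  have hdeg := degree_sum_eq_of_disjoint f s fun i hi j hj hij hdeg =>
    hij (h hi hj (natDegree_eq_of_degree_eq hdeg))
  rw [hsum, degree_zero, eq_comm, Finset.sup_eq_bot_iff] at hdeg
  exact fun i hi => degree_eq_bot.1 (hdeg i hi)

lemma Set.Finite.exists_bijOn_Iio_card {α : Type*} {t : Set α} (ht : t.Finite) {a : α}
    (ha : a ∈ t) : ∃ e : ℕ → α, e 0 = a ∧ Set.BijOn e (Set.Iio (Nat.card t)) t := by
  have : Finite t := ht
  have : Nonempty t := ⟨⟨a, ha⟩⟩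
  have hpos : 0 < Nat.card t := Nat.card_pos
  let g : Fin (Nat.card t) ≃ t :=
    (Equiv.swap ⟨0, hpos⟩ (Finite.equivFin t ⟨a, ha⟩)).trans (Finite.equivFin t).symm
  refine ⟨fun k => if h : k < Nat.card t then g ⟨k, h⟩ else a, ?_, ?_, ?_, ?_⟩
  · simp only [dif_pos hpos, g, Equiv.trans_apply, Equiv.swap_apply_left, Equiv.symm_apply_apply]
  · intro k hk
    simp only [dif_pos (Set.mem_Iio.1 hk)]
    exact (g _).2
  · intro i hi j hj hij
    simp only [dif_pos (Set.mem_Iio.1 hi), dif_pos (Set.mem_Iio.1 hj)] at hij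
    exact Fin.mk.inj_iff.1 (g.injective (Subtype.ext hij))
  · intro x hx
    refine ⟨g.symm ⟨x, hx⟩, (g.symm ⟨x, hx⟩).2, ?_⟩
    simp only [dif_pos (g.symm ⟨x, hx⟩).2, Fin.eta, Equiv.apply_symm_apply]

section SymbolCalculus

variable {d : R →+ R}

lemma mulOp_eq_toAddMonoidEnd (a : R) : mulOp a = Module.toAddMonoidEnd R R a := rfl

@[simp] lemma mulOp_zero : mulOp (0 : R) = 0 := by simp [mulOp_eq_toAddMonoidEnd]

@[simp] lemma mulOp_one : mulOp (1 : R) = 1 := by simp [mulOp_eq_toAddMonoidEnd]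

lemma mulOp_add (a b : R) : mulOp (a + b) = mulOp a + mulOp b := by
  simp [mulOp_eq_toAddMonoidEnd]

lemma mulOp_mul (a b : R) : mulOp (a * b) = mulOp a * mulOp b := by
  simp [mulOp_eq_toAddMonoidEnd]

lemma mulOp_injective : Function.Injective (mulOp : R → AddMonoid.End R) := fun a b h => by
  have h1 : a * 1 = b * 1 := DFunLike.congr_fun h 1
  simpa using h1

lemma IsDeriv.map_one (hd : IsDeriv d) : d 1 = 0 := by
  simpa using hd 1 1

lemma derOp_mul_mulOp (hd : IsDeriv d) (a : R) :
    derOp d * mulOp a = mulOp (d a) + mulOp a * derOp d :=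
  AddMonoidHom.ext fun x => hd a x

variable (d) in
def diffOp : R[X] →+ AddMonoid.End R where
  toFun p := p.sum fun i a => mulOp a * derOp d ^ i
  map_zero' := sum_zero_index _
  map_add' p q := sum_add_index p q _ (fun _ => by simp) fun _ _ _ => by rw [mulOp_add, add_mul]

lemma diffOp_apply (p : R[X]) : diffOp d p = p.sum fun i a => mulOp a * derOp d ^ i := rfl

lemma diffOp_monomial (i : ℕ) (a : R) : diffOp d (monomial i a) = mulOp a * derOp d ^ i := by
  rw [diffOp_apply, sum_monomial_index a _ (by simp)]

lemma diffOp_C (a : R) : diffOp d (C a) = mulOp a := by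
  simpa using diffOp_monomial (d := d) 0 a

lemma diffOp_X_pow (i : ℕ) : diffOp d (X ^ i) = derOp d ^ i := by
  simpa [X_pow_eq_monomial] using diffOp_monomial (d := d) i 1

lemma diffOp_one : diffOp d (1 : R[X]) = 1 := by
  simpa using diffOp_C (d := d) 1

lemma diffOp_C_mul (a : R) (p : R[X]) : diffOp d (C a * p) = mulOp a * diffOp d p := by
  induction p using Polynomial.induction_on' with
  | add p q hp hq => rw [mul_add, map_add, map_add, hp, hq, mul_add]
  | monomial i b => rw [C_mul_monomial, diffOp_monomial, diffOp_monomial, mulOp_mul, mul_assoc]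

variable (d) in
def coeffDeriv : R[X] →+ R[X] where
  toFun p := p.sum fun i a => monomial i (d a)
  map_zero' := sum_zero_index _
  map_add' p q := sum_add_index p q _ (fun _ => by simp) fun _ _ _ => by rw [map_add, map_add]

@[simp] lemma coeff_coeffDeriv (p : R[X]) (k : ℕ) : (coeffDeriv d p).coeff k = d (p.coeff k) := by
  simp only [coeffDeriv, AddMonoidHom.coe_mk, ZeroHom.coe_mk, coeff_sum, coeff_monomial]
  rw [Polynomial.sum_def, Finset.sum_ite_eq']
  split_ifs with h
  · rfl
  · rw [notMem_support_iff.1 h, map_zero]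

variable (d) in
def derComp : R[X] →+ R[X] := AddMonoidHom.mulLeft X + coeffDeriv d

lemma derComp_apply (p : R[X]) : derComp d p = X * p + coeffDeriv d p := rfl

lemma derOp_mul_diffOp (hd : IsDeriv d) (p : R[X]) :
    derOp d * diffOp d p = diffOp d (derComp d p) := by
  induction p using Polynomial.induction_on' with
  | add p q hp hq => rw [map_add, mul_add, hp, hq, map_add, map_add]
  | monomial i a =>
    have hcoeff : coeffDeriv d (monomial i a) = monomial i (d a) := by
      ext k; simp only [coeff_coeffDeriv, coeff_monomial]; split_ifs <;> simp
    rw [derComp_apply, hcoeff, X_mul_monomial, map_add, diffOp_monomial, diffOp_monomial,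
      diffOp_monomial, ← mul_assoc, derOp_mul_mulOp hd, add_mul, mul_assoc, ← pow_succ', add_comm]

lemma derOp_pow_mul_diffOp (hd : IsDeriv d) (i : ℕ) (p : R[X]) :
    derOp d ^ i * diffOp d p = diffOp d ((derComp d)^[i] p) := by
  induction i with
  | zero => simp
  | succ i ih => rw [pow_succ', mul_assoc, ih, derOp_mul_diffOp hd, Function.iterate_succ_apply']

variable (d) in
def symbMul (p q : R[X]) : R[X] := p.sum fun i a => C a * (derComp d)^[i] q

lemma diffOp_symbMul (hd : IsDeriv d) (p q : R[X]) :
    diffOp d (symbMul d p q) = diffOp d p * diffOp d q := by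
  simp only [symbMul, diffOp_apply p, Polynomial.sum_def, map_sum, diffOp_C_mul,
    ← derOp_pow_mul_diffOp hd, Finset.sum_mul, mul_assoc]

end SymbolCalculus

section SymbolCoefficients

variable {d : R →+ R}

lemma derComp_iterate_succ_sub (i : ℕ) (q : R[X]) :
    (derComp d)^[i + 1] q - X ^ (i + 1) * q =
      X * ((derComp d)^[i] q - X ^ i * q) + coeffDeriv d ((derComp d)^[i] q) := by
  rw [Function.iterate_succ_apply', derComp_apply, pow_succ', mul_assoc, mul_sub]
  abel

lemma coeff_derComp_iterate_sub_of_le {q : R[X]} {m : ℕ} (hq : q.natDegree ≤ m) (i : ℕ) {j : ℕ}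
    (hj : i + m ≤ j) : ((derComp d)^[i] q - X ^ i * q).coeff j = 0 := by
  induction i generalizing j with
  | zero => simp
  | succ i ih =>
    obtain ⟨j, rfl⟩ : ∃ j', j = j' + 1 := ⟨j - 1, by omega⟩
    have hXq : (X ^ i * q).coeff (j + 1) = 0 := by
      rw [coeff_X_pow_mul']
      split_ifs
      · exact coeff_eq_zero_of_natDegree_lt (by omega)
      · rfl
    have hs : ((derComp d)^[i] q).coeff (j + 1) = 0 := by
      rw [← sub_add_cancel ((derComp d)^[i] q) (X ^ i * q), coeff_add, ih (by omega), hXq,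
        add_zero]
    rw [derComp_iterate_succ_sub, coeff_add, coeff_X_mul, ih (by omega), coeff_coeffDeriv, hs,
      map_zero, add_zero]

lemma coeff_derComp_iterate_sub {q : R[X]} {m : ℕ} (hq : q.natDegree ≤ m) (i : ℕ) :
    ((derComp d)^[i] q - X ^ i * q).coeff (i + m - 1) = i * d (q.coeff m) := by
  induction i with
  | zero => simp
  | succ i ih =>
    have hX : (X * ((derComp d)^[i] q - X ^ i * q)).coeff (i + m) = i * d (q.coeff m) := by
      rcases i with _ | i
      · simp
      · rw [show i + 1 + m = (i + 1 + m - 1) + 1 by omega, coeff_X_mul, ih]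
    have hs : ((derComp d)^[i] q).coeff (i + m) = q.coeff m := by
      rw [← sub_add_cancel ((derComp d)^[i] q) (X ^ i * q), coeff_add,
        coeff_derComp_iterate_sub_of_le hq i le_rfl, zero_add, add_comm, coeff_X_pow_mul]
    rw [derComp_iterate_succ_sub, show i + 1 + m - 1 = i + m by omega, coeff_add, hX,
      coeff_coeffDeriv, hs, Nat.cast_succ, add_one_mul]

lemma symbMul_sub_mul (p q : R[X]) :
    symbMul d p q - p * q = ∑ i ∈ p.support, C (p.coeff i) * ((derComp d)^[i] q - X ^ i * q) := by
  have hpq : p * q = ∑ i ∈ p.support, C (p.coeff i) * (X ^ i * q) := by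
    conv_lhs => rw [as_sum_support_C_mul_X_pow p]
    simp only [Finset.sum_mul, mul_assoc]
  rw [hpq, symbMul, sum_def, ← Finset.sum_sub_distrib]
  simp only [mul_sub]

lemma coeff_symbMul_sub_mul_of_le {p q : R[X]} {k m j : ℕ} (hp : p.natDegree ≤ k)
    (hq : q.natDegree ≤ m) (hj : k + m ≤ j) : (symbMul d p q - p * q).coeff j = 0 := by
  rw [symbMul_sub_mul, finsetSum_coeff]
  refine Finset.sum_eq_zero fun i hi => ?_
  have hik := (le_natDegree_of_mem_supp i hi).trans hp
  rw [coeff_C_mul, coeff_derComp_iterate_sub_of_le hq i (by omega), mul_zero]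

lemma coeff_symbMul_sub_mul {p q : R[X]} {k m : ℕ} (hp : p.natDegree ≤ k) (hq : q.natDegree ≤ m) :
    (symbMul d p q - p * q).coeff (k + m - 1) = k * p.coeff k * d (q.coeff m) := by
  rw [symbMul_sub_mul, finsetSum_coeff, Finset.sum_eq_single k]
  · rw [coeff_C_mul, coeff_derComp_iterate_sub hq, ← mul_assoc, (Nat.cast_commute k _).eq]
  · intro i hi hik
    have hik' := (le_natDegree_of_mem_supp i hi).trans hp
    rw [coeff_C_mul, coeff_derComp_iterate_sub_of_le hq i (by omega), mul_zero]
  · intro hk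
    rw [notMem_support_iff.1 hk]
    simp

lemma coeff_symbMul_add {p q : R[X]} {k m : ℕ} (hp : p.natDegree ≤ k) (hq : q.natDegree ≤ m) :
    (symbMul d p q).coeff (k + m) = p.coeff k * q.coeff m := by
  have h := coeff_symbMul_sub_mul_of_le (d := d) hp hq le_rfl
  rwa [coeff_sub, sub_eq_zero, coeff_mul_add_eq_of_natDegree_le hp hq] at h

lemma natDegree_symbMul_le (p q : R[X]) :
    (symbMul d p q).natDegree ≤ p.natDegree + q.natDegree :=
  natDegree_le_iff_coeff_eq_zero.2 fun j hj => by
    have h := coeff_symbMul_sub_mul_of_le (d := d) le_rfl le_rfl hj.le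
    rwa [coeff_sub, sub_eq_zero, coeff_eq_zero_of_natDegree_lt (natDegree_mul_le.trans_lt hj)] at h

lemma natDegree_symbMul [NoZeroDivisors R] {p q : R[X]} (hp : p ≠ 0) (hq : q ≠ 0) :
    (symbMul d p q).natDegree = p.natDegree + q.natDegree :=
  natDegree_eq_of_le_of_coeff_ne_zero (natDegree_symbMul_le p q) <| by
    rw [coeff_symbMul_add le_rfl le_rfl]
    exact mul_ne_zero (leadingCoeff_ne_zero.2 hp) (leadingCoeff_ne_zero.2 hq)

lemma leadingCoeff_symbMul [NoZeroDivisors R] {p q : R[X]} (hp : p ≠ 0) (hq : q ≠ 0) :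
    (symbMul d p q).leadingCoeff = p.leadingCoeff * q.leadingCoeff := by
  rw [leadingCoeff, natDegree_symbMul hp hq, coeff_symbMul_add le_rfl le_rfl]
  rfl

lemma symbMul_ne_zero [NoZeroDivisors R] {p q : R[X]} (hp : p ≠ 0) (hq : q ≠ 0) :
    symbMul d p q ≠ 0 := by
  rw [← leadingCoeff_ne_zero, leadingCoeff_symbMul hp hq]
  exact mul_ne_zero (leadingCoeff_ne_zero.2 hp) (leadingCoeff_ne_zero.2 hq)

end SymbolCoefficients

section Operators

variable {d : R →+ R}

lemma mem_OpLE_iff {P : AddMonoid.End R} {k : ℕ} :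
    P ∈ OpLE d k ↔ ∃ p : R[X], p.natDegree ≤ k ∧ diffOp d p = P := by
  constructor
  · intro h
    induction h using AddSubgroup.closure_induction with
    | mem _ hx =>
      obtain ⟨a, i, hik, rfl⟩ := hx
      exact ⟨monomial i a, (natDegree_monomial_le a).trans hik, diffOp_monomial i a⟩
    | zero => exact ⟨0, by simp, map_zero _⟩
    | add _ _ _ _ hx hy =>
      obtain ⟨p, hp, rfl⟩ := hx
      obtain ⟨q, hq, rfl⟩ := hy
      exact ⟨p + q, natDegree_add_le_of_degree_le hp hq, map_add _ p q⟩
    | neg _ _ hx =>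
      obtain ⟨p, hp, rfl⟩ := hx
      exact ⟨-p, by rwa [natDegree_neg], map_neg _ p⟩
  · rintro ⟨p, hp, rfl⟩
    rw [diffOp_apply, sum_def]
    exact AddSubgroup.sum_mem _ fun i hi => AddSubgroup.subset_closure
      ⟨p.coeff i, i, (le_natDegree_of_mem_supp i hi).trans hp, rfl⟩

lemma isOp_iff {P : AddMonoid.End R} : IsOp d P ↔ ∃ p : R[X], diffOp d p = P :=
  ⟨fun ⟨_, h⟩ => (mem_OpLE_iff.1 h).imp fun _ => And.right,
    fun ⟨p, hp⟩ => ⟨p.natDegree, mem_OpLE_iff.2 ⟨p, le_rfl, hp⟩⟩⟩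

lemma hasOrd_one : HasOrd d (1 : AddMonoid.End R) 0 :=
  ⟨mem_OpLE_iff.2 ⟨1, by simp, diffOp_one⟩, fun _ _ => Nat.zero_le _⟩

lemma one_mem_cent (L : AddMonoid.End R) : (1 : AddMonoid.End R) ∈ Cent d L :=
  ⟨⟨0, hasOrd_one.1⟩, by rw [mul_one, one_mul]⟩

lemma ne_zero_of_monicOrd {L : AddMonoid.End R} {n : ℕ} (hL : MonicOrd d L n) (hn : n ≠ 0) :
    d ≠ 0 := by
  rintro rfl
  have hle : OpLE (0 : R →+ R) n ≤ OpLE 0 0 := (AddSubgroup.closure_le _).2 <| by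
    rintro _ ⟨a, i, -, rfl⟩
    rcases Nat.eq_zero_or_pos i with rfl | hi
    · exact AddSubgroup.subset_closure ⟨a, 0, le_rfl, rfl⟩
    · have h0 : derOp (0 : R →+ R) = 0 := rfl
      simp [h0, zero_pow hi.ne']
  exact hn (Nat.le_zero.1 (hL.1.2 0 (hle hL.1.1)))

variable (hd : IsDeriv d)
include hd

def diffOpSubring : Subring (AddMonoid.End R) where
  carrier := Set.range (diffOp d)
  mul_mem' := by
    rintro _ _ ⟨p, rfl⟩ ⟨q, rfl⟩
    exact ⟨symbMul d p q, diffOp_symbMul hd p q⟩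
  one_mem' := ⟨1, diffOp_one⟩
  add_mem' := by
    rintro _ _ ⟨p, rfl⟩ ⟨q, rfl⟩
    exact ⟨p + q, map_add _ p q⟩
  zero_mem' := ⟨0, map_zero _⟩
  neg_mem' := by
    rintro _ ⟨p, rfl⟩
    exact ⟨-p, map_neg _ p⟩

lemma mem_diffOpSubring {P : AddMonoid.End R} : P ∈ diffOpSubring hd ↔ IsOp d P :=
  isOp_iff.symm

def centSubring (L : AddMonoid.End R) : Subring (AddMonoid.End R) :=
  diffOpSubring hd ⊓ Subring.centralizer {L}

lemma mem_centSubring {L P : AddMonoid.End R} : P ∈ centSubring hd L ↔ P ∈ Cent d L := by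
  rw [centSubring, Subring.mem_inf, mem_diffOpSubring, Subring.mem_centralizer_iff]
  simp [Cent]

end Operators

section CommRing

variable {A : Type} [CommRing A] {d : A →+ A}

lemma commute_mulOp_diffOp (hd : IsDeriv d) {c : A} (hc : d c = 0) (p : A[X]) :
    Commute (mulOp c) (diffOp d p) := by
  have hD : Commute (mulOp c) (derOp d) := by
    rw [Commute, SemiconjBy, derOp_mul_mulOp hd, hc, mulOp_zero, zero_add]
  rw [diffOp_apply, sum_def]
  refine Commute.sum_right _ _ _ fun i _ => Commute.mul_right ?_ (hD.pow_right i)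
  rw [Commute, SemiconjBy, ← mulOp_mul, ← mulOp_mul, mul_comm]

lemma mulOp_mem_cent (hd : IsDeriv d) {c : A} (hc : d c = 0) (l : A[X]) :
    mulOp c ∈ Cent d (diffOp d l) :=
  ⟨isOp_iff.2 ⟨C c, diffOp_C c⟩, (commute_mulOp_diffOp hd hc l).eq.symm⟩

lemma diffOp_mem_cent_self (l : A[X]) : diffOp d l ∈ Cent d (diffOp d l) :=
  ⟨isOp_iff.2 ⟨l, rfl⟩, rfl⟩

end CommRing

section CPoly

variable {d : R →+ R} {L : AddMonoid.End R}

lemma mem_cPoly_iff {P : AddMonoid.End R} :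
    P ∈ CPoly d L ↔ ∃ p : R[X], (∀ k, d (p.coeff k) = 0) ∧
      p.eval₂ (Module.toAddMonoidEnd R R) L = P := by
  simp only [CPoly, Set.mem_ofPred_eq, eval₂_eq_sum_range, mulOp_eq_toAddMonoidEnd, eq_comm]

lemma zero_mem_cPoly : (0 : AddMonoid.End R) ∈ CPoly d L :=
  mem_cPoly_iff.2 ⟨0, by simp, eval₂_zero _ _⟩

lemma add_mem_cPoly {P Q : AddMonoid.End R} (hP : P ∈ CPoly d L) (hQ : Q ∈ CPoly d L) :
    P + Q ∈ CPoly d L := by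
  obtain ⟨p, hp, rfl⟩ := mem_cPoly_iff.1 hP
  obtain ⟨q, hq, rfl⟩ := mem_cPoly_iff.1 hQ
  exact mem_cPoly_iff.2
    ⟨p + q, fun k => by rw [coeff_add, map_add, hp, hq, add_zero], eval₂_add _ _⟩

lemma mulOp_mul_pow_mem_cPoly {c : R} (hc : d c = 0) (t : ℕ) : mulOp c * L ^ t ∈ CPoly d L :=
  mem_cPoly_iff.2 ⟨monomial t c, fun k => by rw [coeff_monomial]; split_ifs <;> simp [hc],
    by rw [eval₂_monomial, mulOp_eq_toAddMonoidEnd]⟩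

end CPoly

section OrderMinimal

def IsOrderMinimal (d : R →+ R) (L : AddMonoid.End R) (n : ℕ) (G : AddMonoid.End R) (o : ℕ) :
    Prop :=
  G ∈ Cent d L ∧ HasOrd d G o ∧
    ∀ Q ∈ Cent d L, Q ≠ 0 → ∀ q : ℕ, HasOrd d Q q → (q : ZMod n) = o → o ≤ q

variable {d : R →+ R} {L : AddMonoid.End R} {n : ℕ}

instance [Nontrivial R] : Nontrivial (AddMonoid.End R) :=
  ⟨⟨1, 0, by simpa using mulOp_injective.ne (one_ne_zero (α := R))⟩⟩

lemma isOrderMinimal_one : IsOrderMinimal d L n 1 0 :=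
  ⟨one_mem_cent L, hasOrd_one, fun _ _ _ _ _ _ => Nat.zero_le _⟩

lemma exists_isOrderMinimal {x : ZMod n}
    (hx : ∃ Q ∈ Cent d L, Q ≠ 0 ∧ ∃ m : ℕ, HasOrd d Q m ∧ x = m) :
    ∃ G o, IsOrderMinimal d L n G o ∧ G ≠ 0 ∧ (o : ZMod n) = x := by
  have hex : ∃ m : ℕ, ∃ Q ∈ Cent d L, Q ≠ 0 ∧ HasOrd d Q m ∧ (m : ZMod n) = x := by
    obtain ⟨Q, hQ, hQ0, m, hm, rfl⟩ := hx
    exact ⟨m, Q, hQ, hQ0, hm, rfl⟩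
  obtain ⟨G, hG, hG0, hGo, hGx⟩ := Nat.find_spec hex
  exact ⟨G, Nat.find hex, ⟨hG, hGo, fun Q hQ hQ0 q hq hqx =>
    Nat.find_min' hex ⟨Q, hQ, hQ0, hq, hqx.trans hGx⟩⟩, hG0, hGx⟩

lemma exists_isOrderMinimal_enum [Nontrivial R] [NeZero n] (H : AddSubgroup (ZMod n))
    (hH : (H : Set (ZMod n)) =
      {x | ∃ Q ∈ Cent d L, Q ≠ 0 ∧ ∃ m : ℕ, HasOrd d Q m ∧ x = (m : ZMod n)}) :
    ∃ (G : ℕ → AddMonoid.End R) (o : ℕ → ℕ), G 0 = 1 ∧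
      (∀ k < Nat.card H, IsOrderMinimal d L n (G k) (o k) ∧ G k ≠ 0) ∧
      Set.BijOn (fun k => (o k : ZMod n)) (Set.Iio (Nat.card H)) H := by
  have hclass : ∀ x ∈ H, ∃ G o, (IsOrderMinimal d L n G o ∧ G ≠ 0) ∧ (o : ZMod n) = x ∧
      (x = 0 → G = 1) := by
    intro x hx
    by_cases hx0 : x = 0
    · exact ⟨1, 0, ⟨isOrderMinimal_one, one_ne_zero⟩, by simp [hx0], fun _ => rfl⟩
    · rw [← SetLike.mem_coe, hH] at hx
      obtain ⟨G, o, hG, hG0, hGx⟩ := exists_isOrderMinimal hx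
      exact ⟨G, o, ⟨hG, hG0⟩, hGx, fun h => absurd h hx0⟩
  choose! G o hG hGx hG1 using hclass
  obtain ⟨e, he0, he⟩ := (Set.toFinite (H : Set (ZMod n))).exists_bijOn_Iio_card H.zero_mem
  exact ⟨G ∘ e, o ∘ e, by rw [Function.comp_apply, he0, hG1 0 H.zero_mem rfl],
    fun k hk => hG _ (he.mapsTo hk), he.congr fun k hk => (hGx _ (he.mapsTo hk)).symm⟩

end OrderMinimal

section Domain

variable {A : Type} [CommRing A] [IsDomain A] {d : A →+ A} (hd : IsDeriv d) {l : A[X]}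
include hd

lemma exists_monic_diffOp_pow (hl : l.Monic) (t : ℕ) :
    ∃ s : A[X], s.Monic ∧ s.natDegree = l.natDegree * t ∧ diffOp d s = diffOp d l ^ t := by
  induction t with
  | zero => exact ⟨1, monic_one, by simp, by rw [diffOp_one, pow_zero]⟩
  | succ t ih =>
    obtain ⟨s, hs, hsdeg, hsl⟩ := ih
    refine ⟨symbMul d s l, ?_, ?_, by rw [diffOp_symbMul hd, hsl, pow_succ]⟩
    · rw [Monic, leadingCoeff_symbMul hs.ne_zero hl.ne_zero, hs.leadingCoeff, hl.leadingCoeff,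
        one_mul]
    · rw [natDegree_symbMul hs.ne_zero hl.ne_zero, hsdeg, mul_add_one]

lemma exists_diffOp_eq_eval₂ (hl : l.Monic) (hn : l.natDegree ≠ 0) {p : A[X]} (hp : p ≠ 0) :
    ∃ s : A[X], s.natDegree = l.natDegree * p.natDegree ∧ s.leadingCoeff = p.leadingCoeff ∧
      diffOp d s = p.eval₂ (Module.toAddMonoidEnd A A) (diffOp d l) := by
  induction p using Polynomial.recOnHorner with
  | M0 => exact absurd rfl hp
  | MC p a hp0 _ ih =>
    rcases eq_or_ne p 0 with rfl | hp'
    · exact ⟨C a, by simp, by simp, by simp [diffOp_C, mulOp_eq_toAddMonoidEnd]⟩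
    obtain ⟨s, hsdeg, hslc, hs⟩ := ih hp'
    have hpdeg : p.natDegree ≠ 0 := fun h => hp' (by rw [eq_C_of_natDegree_eq_zero h, hp0, C_0])
    have hlt : ∀ q : A[X], q.natDegree ≠ 0 → (C a).degree < q.degree := fun q hq =>
      degree_C_le.trans_lt (natDegree_pos_iff_degree_pos.1 (Nat.pos_of_ne_zero hq))
    refine ⟨s + C a, by rw [natDegree_add_C, natDegree_add_C, hsdeg], ?_, ?_⟩
    · rw [leadingCoeff_add_of_degree_lt' (hlt s (by rw [hsdeg]; exact mul_ne_zero hn hpdeg)),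
        leadingCoeff_add_of_degree_lt' (hlt p hpdeg), hslc]
    · rw [map_add, hs, diffOp_C, eval₂_add, eval₂_C, mulOp_eq_toAddMonoidEnd]
  | MX p hp' ih =>
    obtain ⟨s, hsdeg, hslc, hs⟩ := ih hp'
    have hs0 : s ≠ 0 := leadingCoeff_ne_zero.1 (hslc ▸ leadingCoeff_ne_zero.2 hp')
    refine ⟨symbMul d s l, ?_, ?_, by rw [diffOp_symbMul hd, hs, eval₂_mul_X]⟩
    · rw [natDegree_symbMul hs0 hl.ne_zero, hsdeg, natDegree_mul_X hp', mul_add_one]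
    · rw [leadingCoeff_symbMul hs0 hl.ne_zero, hl.leadingCoeff, mul_one, hslc, leadingCoeff_mul_X]

lemma exists_diffOp_eq_of_mem_cPoly (hl : l.Monic) (hn : l.natDegree ≠ 0) {P : AddMonoid.End A}
    (hP : P ∈ CPoly d (diffOp d l)) (hP0 : P ≠ 0) :
    ∃ s : A[X], s ≠ 0 ∧ l.natDegree ∣ s.natDegree ∧ diffOp d s = P := by
  obtain ⟨p, -, rfl⟩ := mem_cPoly_iff.1 hP
  have hp : p ≠ 0 := by
    rintro rfl
    exact hP0 (eval₂_zero _ _)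
  obtain ⟨s, hsdeg, hslc, hs⟩ := exists_diffOp_eq_eval₂ hd hl hn hp
  exact ⟨s, leadingCoeff_ne_zero.1 (hslc ▸ leadingCoeff_ne_zero.2 hp), ⟨_, hsdeg⟩, hs⟩

variable [CharZero A] (hd0 : d ≠ 0)
include hd0

theorem diffOp_injective : Function.Injective (diffOp d) := by
  obtain ⟨u, hu⟩ : ∃ u, d u ≠ 0 := by simpa using DFunLike.ne_iff.1 hd0
  refine (injective_iff_map_eq_zero _).2 fun p hp => ?_
  suffices ∀ k (p : A[X]), p.natDegree ≤ k → diffOp d p = 0 → p = 0 from this _ p le_rfl hp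
  intro k
  induction k with
  | zero =>
    intro p hp h0
    rw [eq_C_of_natDegree_le_zero hp, diffOp_C, ← mulOp_zero] at h0
    rw [eq_C_of_natDegree_le_zero hp, mulOp_injective h0, C_0]
  | succ k ih =>
    intro p hp h0
    -- the commutator of `diffOp d p` with `mulOp u` has order `≤ k` and `k`-th coefficient
    -- `(k + 1) * p.coeff (k + 1) * d u`
    have hcomm : symbMul d p (C u) - p * C u = 0 := by
      refine ih _ (natDegree_le_iff_coeff_eq_zero.2 fun j hj =>
        coeff_symbMul_sub_mul_of_le hp (natDegree_C u).le (by omega)) ?_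
      rw [map_sub, diffOp_symbMul hd, mul_comm, diffOp_C_mul, h0, zero_mul, mul_zero, sub_zero]
    have htop := coeff_symbMul_sub_mul (d := d) hp (natDegree_C u).le
    rw [hcomm, add_zero, Nat.add_sub_cancel, coeff_zero, coeff_C_zero, eq_comm] at htop
    have hcoeff : p.coeff (k + 1) = 0 := by
      simpa [Nat.cast_add_one_ne_zero, hu] using htop
    exact ih p (natDegree_le_pred hp hcoeff) h0

lemma diffOp_mem_OpLE_iff {p : A[X]} {k : ℕ} : diffOp d p ∈ OpLE d k ↔ p.natDegree ≤ k := by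
  refine ⟨fun h => ?_, fun h => mem_OpLE_iff.2 ⟨p, h, rfl⟩⟩
  obtain ⟨q, hq, hqp⟩ := mem_OpLE_iff.1 h
  rwa [← diffOp_injective hd hd0 hqp]

lemma hasOrd_diffOp_iff {p : A[X]} {m : ℕ} : HasOrd d (diffOp d p) m ↔ p.natDegree = m := by
  simp only [HasOrd, diffOp_mem_OpLE_iff hd hd0]
  exact ⟨fun h => le_antisymm h.1 (h.2 _ le_rfl), by rintro rfl; exact ⟨le_rfl, fun _ => id⟩⟩

lemma exists_monic_of_monicOrd {L : AddMonoid.End A} {n : ℕ} (hL : MonicOrd d L n) (hn : n ≠ 0) :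
    ∃ l : A[X], l.Monic ∧ l.natDegree = n ∧ diffOp d l = L := by
  obtain ⟨l, -, rfl⟩ := mem_OpLE_iff.1 hL.1.1
  have hdeg : l.natDegree = n := (hasOrd_diffOp_iff hd hd0).1 hL.1
  have hsub : (l - X ^ n).natDegree ≤ n - 1 := by
    rw [← diffOp_mem_OpLE_iff hd hd0, map_sub, diffOp_X_pow]
    exact hL.2
  have hcoeff := coeff_eq_zero_of_natDegree_lt (hsub.trans_lt (Nat.sub_one_lt hn))
  rw [coeff_sub, coeff_X_pow_self, sub_eq_zero] at hcoeff
  exact ⟨l, by rw [Monic, leadingCoeff, hdeg, hcoeff], hdeg, rfl⟩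

theorem deriv_leadingCoeff_eq_zero (hl : l.Monic) (hn : l.natDegree ≠ 0) {a : A[X]}
    (hcomm : Commute (diffOp d l) (diffOp d a)) : d a.leadingCoeff = 0 := by
  have hsymb : symbMul d l a = symbMul d a l :=
    diffOp_injective hd hd0 (by rw [diffOp_symbMul hd, diffOp_symbMul hd]; exact hcomm.eq)
  have hla := coeff_symbMul_sub_mul (d := d) (le_refl l.natDegree) (le_refl a.natDegree)
  have hal := coeff_symbMul_sub_mul (d := d) (le_refl a.natDegree) (le_refl l.natDegree)
  rw [hsymb, mul_comm l, add_comm l.natDegree, hal, coeff_natDegree, coeff_natDegree,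
    hl.leadingCoeff, hd.map_one, mul_zero, mul_one, eq_comm, mul_eq_zero] at hla
  exact hla.resolve_left (Nat.cast_ne_zero.2 hn)

end Domain

lemma IsDeriv.map_inv_eq_zero {F : Type} [Field F] {d : F →+ F} (hd : IsDeriv d) {b : F}
    (hb : d b = 0) : d b⁻¹ = 0 := by
  rcases eq_or_ne b 0 with rfl | hb0
  · rw [inv_zero, map_zero]
  · have h := hd b b⁻¹
    rw [mul_inv_cancel₀ hb0, hd.map_one, hb, zero_mul, zero_add, eq_comm, mul_eq_zero] at h
    exact h.resolve_left hb0

section Field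

variable {F : Type} [Field F] [CharZero F] {d : F →+ F} (hd : IsDeriv d) (hd0 : d ≠ 0)
  {l : F[X]} (hl : l.Monic) (hn : l.natDegree ≠ 0)
  {ι : Type*} {s : Finset ι} {G : ι → AddMonoid.End F} {o : ι → ℕ}
include hd hd0 hl hn

lemma exists_sub_mul_degree_lt
    (hG : ∀ i ∈ s, IsOrderMinimal d (diffOp d l) l.natDegree (G i) (o i) ∧ G i ≠ 0)
    (hcover : ∀ Q ∈ Cent d (diffOp d l), Q ≠ 0 → ∀ m : ℕ, HasOrd d Q m →
      ∃ i ∈ s, (m : ZMod l.natDegree) = o i)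
    {q : F[X]} (hq : diffOp d q ∈ Cent d (diffOp d l)) (hq0 : q ≠ 0) :
    ∃ i ∈ s, ∃ c ∈ CPoly d (diffOp d l), ∃ r : F[X], r.degree < q.degree ∧
      diffOp d r ∈ Cent d (diffOp d l) ∧ diffOp d q = diffOp d r + c * G i := by
  have hqord : HasOrd d (diffOp d q) q.natDegree := (hasOrd_diffOp_iff hd hd0).2 rfl
  have hQ0 : diffOp d q ≠ 0 := fun h => hq0 (diffOp_injective hd hd0 (h.trans (map_zero _).symm))
  obtain ⟨i, hi, hclass⟩ := hcover _ hq hQ0 _ hqord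
  obtain ⟨⟨hGc, hGord, hGmin⟩, hG0⟩ := hG i hi
  have hle : o i ≤ q.natDegree := hGmin _ hq hQ0 _ hqord hclass
  obtain ⟨t, ht⟩ : l.natDegree ∣ q.natDegree - o i :=
    (Nat.modEq_iff_dvd' hle).1 ((ZMod.natCast_eq_natCast_iff _ _ _).1 hclass.symm)
  obtain ⟨g, hg⟩ := isOp_iff.1 hGc.1
  rw [← hg] at hG0 hGc hGord
  have hg0 : g ≠ 0 := by
    rintro rfl
    exact hG0 (map_zero _)
  have hgdeg : g.natDegree = o i := (hasOrd_diffOp_iff hd hd0).1 hGord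
  obtain ⟨lp, hlp, hlpdeg, hlpL⟩ := exists_monic_diffOp_pow hd hl t
  have hdq : d q.leadingCoeff = 0 := deriv_leadingCoeff_eq_zero hd hd0 hl hn hq.2
  have hdg : d g.leadingCoeff = 0 := deriv_leadingCoeff_eq_zero hd hd0 hl hn hGc.2
  set c := q.leadingCoeff * g.leadingCoeff⁻¹ with hc
  have hdc : d c = 0 := by rw [hc, hd, hdq, hd.map_inv_eq_zero hdg, zero_mul, mul_zero, add_zero]
  have hc0 : c ≠ 0 :=
    mul_ne_zero (leadingCoeff_ne_zero.2 hq0) (inv_ne_zero (leadingCoeff_ne_zero.2 hg0))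
  set r := C c * symbMul d lp g
  have hr : diffOp d r = mulOp c * diffOp d l ^ t * diffOp d g := by
    rw [diffOp_C_mul, diffOp_symbMul hd, hlpL, mul_assoc]
  have hrlc : r.leadingCoeff = q.leadingCoeff := by
    rw [leadingCoeff_mul, leadingCoeff_C, leadingCoeff_symbMul hlp.ne_zero hg0, hlp.leadingCoeff,
      one_mul, hc, inv_mul_cancel_right₀ (leadingCoeff_ne_zero.2 hg0)]
  have hrdeg : r.degree = q.degree := by
    rw [degree_C_mul hc0, degree_eq_natDegree (symbMul_ne_zero hlp.ne_zero hg0),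
      degree_eq_natDegree hq0, natDegree_symbMul hlp.ne_zero hg0, hlpdeg, hgdeg]
    norm_cast
    omega
  refine ⟨i, hi, mulOp c * diffOp d l ^ t, mulOp_mul_pow_mem_cPoly hdc t, q - r,
    degree_sub_lt_left hrdeg.symm hq0 hrlc.symm, ?_, by rw [← hg, map_sub, hr, sub_add_cancel]⟩
  rw [← mem_centSubring hd] at hq hGc ⊢
  rw [map_sub, hr]
  exact sub_mem hq (mul_mem (mul_mem ((mem_centSubring hd).2 (mulOp_mem_cent hd hdc l))
    (pow_mem ((mem_centSubring hd).2 (diffOp_mem_cent_self l)) t)) hGc)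

theorem exists_sum_mul_eq_of_mem_cent
    (hG : ∀ i ∈ s, IsOrderMinimal d (diffOp d l) l.natDegree (G i) (o i) ∧ G i ≠ 0)
    (hcover : ∀ Q ∈ Cent d (diffOp d l), Q ≠ 0 → ∀ m : ℕ, HasOrd d Q m →
      ∃ i ∈ s, (m : ZMod l.natDegree) = o i)
    {Q : AddMonoid.End F} (hQ : Q ∈ Cent d (diffOp d l)) :
    ∃ c : ι → AddMonoid.End F, (∀ i, c i ∈ CPoly d (diffOp d l)) ∧ Q = ∑ i ∈ s, c i * G i := by
  obtain ⟨q, rfl⟩ := isOp_iff.1 hQ.1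
  induction hm : q.natDegree using Nat.strong_induction_on generalizing q with
  | _ m ih =>
    rcases eq_or_ne q 0 with rfl | hq0
    · exact ⟨0, fun _ => zero_mem_cPoly, by simp⟩
    obtain ⟨i, hi, c, hc, r, hrq, hr, hqr⟩ := exists_sub_mul_degree_lt hd hd0 hl hn hG hcover hQ hq0
    obtain ⟨c', hc', hr'⟩ : ∃ c' : ι → AddMonoid.End F, (∀ j, c' j ∈ CPoly d (diffOp d l)) ∧
        diffOp d r = ∑ j ∈ s, c' j * G j := by
      rcases eq_or_ne r 0 with rfl | hr0
      · exact ⟨0, fun _ => zero_mem_cPoly, by simp⟩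
      · exact ih _ (hm ▸ natDegree_lt_natDegree hr0 hrq) r hr rfl
    refine ⟨c' + Pi.single i c, fun j => add_mem_cPoly (hc' j) ?_, ?_⟩
    · rcases eq_or_ne j i with rfl | hji
      · simpa using hc
      · simpa [hji] using zero_mem_cPoly
    · rw [hqr, hr']
      simp [add_mul, Finset.sum_add_distrib, Pi.single_apply, hi]

theorem eq_zero_of_sum_mul_eq_zero (hG : ∀ i ∈ s, G i ≠ 0 ∧ HasOrd d (G i) (o i))
    (hinj : Set.InjOn (fun i => (o i : ZMod l.natDegree)) s) {c : ι → AddMonoid.End F}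
    (hc : ∀ i ∈ s, c i ∈ CPoly d (diffOp d l)) (hsum : ∑ i ∈ s, c i * G i = 0) :
    ∀ i ∈ s, c i = 0 := by
  have hsymb : ∀ i ∈ s, ∃ f : F[X], diffOp d f = c i * G i ∧
      (c i ≠ 0 → f ≠ 0 ∧ (f.natDegree : ZMod l.natDegree) = o i) := by
    intro i hi
    obtain ⟨hG0, hGord⟩ := hG i hi
    obtain ⟨g, -, hg⟩ := mem_OpLE_iff.1 hGord.1
    rw [← hg] at hG0 hGord ⊢
    have hg0 : g ≠ 0 := by
      rintro rfl
      exact hG0 (map_zero _)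
    by_cases hci : c i = 0
    · exact ⟨0, by rw [hci, zero_mul, map_zero], fun h => absurd hci h⟩
    obtain ⟨p, hp0, ⟨J, hJ⟩, hp⟩ := exists_diffOp_eq_of_mem_cPoly hd hl hn (hc i hi) hci
    refine ⟨symbMul d p g, by rw [diffOp_symbMul hd, hp], fun _ => ⟨symbMul_ne_zero hp0 hg0, ?_⟩⟩
    rw [natDegree_symbMul hp0 hg0, hJ, (hasOrd_diffOp_iff hd hd0).1 hGord]
    simp
  choose! f hf hf0 using hsymb
  have hcf : ∀ i ∈ s, f i ≠ 0 → c i ≠ 0 := fun i hi hfi hci =>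
    hfi (diffOp_injective hd hd0 (by rw [hf i hi, hci, zero_mul, map_zero]))
  have hfsum : ∑ i ∈ s, f i = 0 :=
    diffOp_injective hd hd0 (by rw [map_sum, map_zero, ← hsum]; exact Finset.sum_congr rfl hf)
  have hf_zero := eq_zero_of_sum_eq_zero_of_injOn_natDegree (fun i ⟨hi, hfi⟩ j ⟨hj, hfj⟩ hij =>
    hinj hi hj (by
      dsimp only at hij ⊢
      rw [← (hf0 i hi (hcf i hi hfi)).2, ← (hf0 j hj (hcf j hj hfj)).2, hij])) hfsum
  exact fun i hi => by_contra fun hci => (hf0 i hi hci).1 (hf_zero i hi)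

end Field

/-- **Goodearl's theorem.** `Z(L)` is a free `C[L]`-module of rank
`d = |O|`, with a basis `G_0 = 1, G_1, ..., G_{d−1}` of order-minimal operators whose
order classes modulo `n` exhaust the group of orders `O`. -/
theorem goodearl_basis {F : Type} [Field F] [CharZero F]
    (d : F →+ F) (hd : IsDeriv d) (L : AddMonoid.End F) (n : ℕ) (hn : 1 ≤ n)
    (hL : MonicOrd d L n) (H : AddSubgroup (ZMod n))
    (hH : (H : Set (ZMod n)) =
      {x | ∃ Q ∈ Cent d L, Q ≠ 0 ∧ ∃ m : ℕ, HasOrd d Q m ∧ x = (m : ZMod n)}) :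
    ∃ (G : ℕ → AddMonoid.End F) (o : ℕ → ℕ),
      G 0 = 1 ∧
      (∀ k < Nat.card H,
        G k ∈ Cent d L ∧ HasOrd d (G k) (o k) ∧
        (∀ Q ∈ Cent d L, Q ≠ 0 → ∀ q : ℕ, HasOrd d Q q →
          (q : ZMod n) = (o k : ZMod n) → o k ≤ q)) ∧
      ({x : ZMod n | ∃ k < Nat.card H, x = (o k : ZMod n)} = (H : Set (ZMod n))) ∧
      (∀ Q ∈ Cent d L, ∃ c : ℕ → AddMonoid.End F,
        (∀ i, c i ∈ CPoly d L) ∧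
        Q = ∑ i ∈ Finset.range (Nat.card H), c i * G i) ∧
      (∀ c : ℕ → AddMonoid.End F, (∀ i, c i ∈ CPoly d L) →
        ∑ i ∈ Finset.range (Nat.card H), c i * G i = 0 →
        ∀ i < Nat.card H, c i = 0) := by
  have hd0 : d ≠ 0 := ne_zero_of_monicOrd hL (by omega)
  obtain ⟨l, hl, rfl, rfl⟩ := exists_monic_of_monicOrd hd hd0 hL (by omega)
  have hn0 : l.natDegree ≠ 0 := by omega
  have : NeZero l.natDegree := ⟨hn0⟩
  obtain ⟨G, o, hG1, hG, ho⟩ := exists_isOrderMinimal_enum H hH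
  refine ⟨G, o, hG1, fun k hk => (hG k hk).1, ?_, fun Q hQ => ?_, fun c hc hsum => ?_⟩
  · rw [← ho.image_eq]
    ext x
    simp [eq_comm]
  · refine exists_sum_mul_eq_of_mem_cent hd hd0 hl hn0
      (fun k hk => hG k (Finset.mem_range.1 hk)) (fun Q hQ hQ0 m hm => ?_) hQ
    have hmH : (m : ZMod l.natDegree) ∈ (H : Set (ZMod l.natDegree)) := by
      rw [hH]
      exact ⟨Q, hQ, hQ0, m, hm, rfl⟩
    obtain ⟨k, hk, hkm⟩ := ho.surjOn hmH
    exact ⟨k, Finset.mem_range.2 hk, hkm.symm⟩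
  · have hzero := eq_zero_of_sum_mul_eq_zero hd hd0 hl hn0
      (fun k hk => ⟨(hG k (Finset.mem_range.1 hk)).2, (hG k (Finset.mem_range.1 hk)).1.2.1⟩)
      (by simpa using ho.injOn) (fun i _ => hc i) hsum
    exact fun i hi => hzero i (Finset.mem_range.2 hi)
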